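/- Let a < b be real numbers and N' ≥ 1 an integer. For r, q ∈ {1,…,N'}, the scaling functions satisfy ⟨K^wl_{N'}(·, r), K^wl_{N'}(·, q)⟩_{L²([a,b])} = K^wl_{N'}(a + (2r−1)(b−a)/(2N'), q). In particular, {K^wl_{N'}(·, r) : r = 1,…,N'} is an orthogonal set in L²([a,b]) with respect to this inner product. -/

import Mathlib

open Real Finset

noncomputable section

/-- The cosine wavelet scaling function
`K^wl_{N'}(x, r) = 1/2 + ∑_{k=1}^{N'−1} cos(kπ(x−a)/(b−a)) cos(kπ(2r−1)/(2N'))`. -/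
def Kwl (a b : ℝ) (N' : ℕ) (x : ℝ) (r : ℕ) : ℝ :=
  1 / 2 + ∑ k ∈ Finset.Ico 1 N',
    Real.cos ((k : ℝ) * π * (x - a) / (b - a)) *
      Real.cos ((k : ℝ) * π * (2 * (r : ℝ) - 1) / (2 * (N' : ℝ)))

/-- The inner product `⟨f, g⟩_{L²([a,b])} = (2/(b−a)) ∫_a^b f(y) g(y) dy`. -/
def ip (a b : ℝ) (f g : ℝ → ℝ) : ℝ := (2 / (b - a)) * ∫ y in a..b, f y * g y

/-- The norm associated with `ip`. -/
def ipNorm (a b : ℝ) (f : ℝ → ℝ) : ℝ := Real.sqrt (ip a b f f)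

/-- `V_{N'} = span{1/√2, cos(kπ(y−a)/(b−a)) : k = 1,…,N'−1}`. -/
def Vspace (a b : ℝ) (N' : ℕ) : Submodule ℝ (ℝ → ℝ) :=
  Submodule.span ℝ ({fun _ => 1 / Real.sqrt 2} ∪
    {g | ∃ k ∈ Finset.Ico 1 N', g = fun y => Real.cos ((k : ℝ) * π * (y - a) / (b - a))})

/-- Integral of a nonconstant cosine mode over `[a,b]` vanishes. -/
lemma intcos (a b : ℝ) (hab : a < b) (m : ℤ) (hm : m ≠ 0) :
    ∫ x in a..b, Real.cos ((m : ℝ) * π * (x - a) / (b - a)) = 0 := by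
  have hL : b - a ≠ 0 := sub_ne_zero.mpr hab.ne'
  have hc : (m : ℝ) * π / (b - a) ≠ 0 :=
    div_ne_zero (mul_ne_zero (Int.cast_ne_zero.mpr hm) Real.pi_ne_zero) hL
  have h1 : ∀ x : ℝ, (m : ℝ) * π * (x - a) / (b - a)
      = ((m : ℝ) * π / (b - a)) * x + (-((m : ℝ) * π / (b - a) * a)) := by
    intro x; field_simp; ring
  simp_rw [h1]
  rw [intervalIntegral.integral_comp_mul_add Real.cos hc, integral_cos]
  have e1 : (m : ℝ) * π / (b - a) * a + -((m : ℝ) * π / (b - a) * a) = 0 := by ring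
  have e2 : (m : ℝ) * π / (b - a) * b + -((m : ℝ) * π / (b - a) * a) = (m : ℝ) * π := by
    field_simp; ring
  rw [e1, e2, Real.sin_int_mul_pi, Real.sin_zero]
  simp

/-- Orthogonality of the cosine modes on `[a,b]`. -/
lemma int_uu (a b : ℝ) (hab : a < b) (k j : ℕ) (hk : 1 ≤ k) (hj : 1 ≤ j) :
    ∫ x in a..b, Real.cos ((k : ℝ) * π * (x - a) / (b - a)) *
      Real.cos ((j : ℝ) * π * (x - a) / (b - a)) =
      if k = j then (b - a) / 2 else 0 := by
  have hpt : ∀ x : ℝ, Real.cos ((k : ℝ) * π * (x - a) / (b - a)) *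
      Real.cos ((j : ℝ) * π * (x - a) / (b - a)) =
      (Real.cos ((((k : ℤ) - j : ℤ) : ℝ) * π * (x - a) / (b - a)) +
       Real.cos ((((k : ℤ) + j : ℤ) : ℝ) * π * (x - a) / (b - a))) / 2 := by
    intro x
    have h := Real.cos_add ((k : ℝ) * π * (x - a) / (b - a)) ((j : ℝ) * π * (x - a) / (b - a))
    have h2 := Real.cos_sub ((k : ℝ) * π * (x - a) / (b - a)) ((j : ℝ) * π * (x - a) / (b - a))
    have e1 : (((k : ℤ) - j : ℤ) : ℝ) * π * (x - a) / (b - a)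
        = (k : ℝ) * π * (x - a) / (b - a) - (j : ℝ) * π * (x - a) / (b - a) := by
      push_cast; ring
    have e2 : (((k : ℤ) + j : ℤ) : ℝ) * π * (x - a) / (b - a)
        = (k : ℝ) * π * (x - a) / (b - a) + (j : ℝ) * π * (x - a) / (b - a) := by
      push_cast; ring
    rw [e1, e2, h, h2]; ring
  simp_rw [hpt]
  have hc1 : Continuous fun x : ℝ => Real.cos ((((k : ℤ) - j : ℤ) : ℝ) * π * (x - a) / (b - a)) := by
    fun_prop
  have hc2 : Continuous fun x : ℝ => Real.cos ((((k : ℤ) + j : ℤ) : ℝ) * π * (x - a) / (b - a)) := by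
    fun_prop
  rw [intervalIntegral.integral_div]
  rw [intervalIntegral.integral_add (hc1.intervalIntegrable a b) (hc2.intervalIntegrable a b)]
  rw [intcos a b hab ((k : ℤ) + j) (by positivity)]
  by_cases hkj : k = j
  · subst hkj
    simp only [sub_self, Int.cast_zero, zero_mul, zero_div, Real.cos_zero, if_pos rfl]
    rw [intervalIntegral.integral_const]
    simp [smul_eq_mul]
  · rw [intcos a b hab ((k : ℤ) - j) (by omega), if_neg hkj]
    norm_num

/-- The inner product of two scaling functions as a discrete cosine sum. -/
lemma ip_eq (a b : ℝ) (hab : a < b) (N' r q : ℕ) :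
    ip a b (fun x => Kwl a b N' x r) (fun x => Kwl a b N' x q)
      = 1 / 2 + ∑ k ∈ Finset.Ico 1 N',
          Real.cos ((k : ℝ) * π * (2 * (r : ℝ) - 1) / (2 * (N' : ℝ))) *
          Real.cos ((k : ℝ) * π * (2 * (q : ℝ) - 1) / (2 * (N' : ℝ))) := by
  have hL : b - a ≠ 0 := sub_ne_zero.mpr hab.ne'
  set u : ℕ → ℝ → ℝ := fun k x => Real.cos ((k : ℝ) * π * (x - a) / (b - a)) with hu
  set c : ℕ → ℕ → ℝ :=
    fun k s => Real.cos ((k : ℝ) * π * (2 * (s : ℝ) - 1) / (2 * (N' : ℝ))) with hc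
  have hucont : ∀ k, Continuous (u k) := by intro k; simp only [hu]; fun_prop
  have hpt : ∀ x : ℝ, Kwl a b N' x r * Kwl a b N' x q
      = 1 / 4 + (∑ j ∈ Finset.Ico 1 N', c j q / 2 * u j x)
        + (∑ k ∈ Finset.Ico 1 N', c k r / 2 * u k x)
        + ∑ k ∈ Finset.Ico 1 N', ∑ j ∈ Finset.Ico 1 N',
            c k r * c j q * (u k x * u j x) := by
    intro x
    unfold Kwl
    rw [add_mul, mul_add, mul_add, Finset.sum_mul_sum]
    rw [Finset.mul_sum, Finset.sum_mul]
    have e1 : ∀ j ∈ Finset.Ico 1 N', 1 / 2 * (u j x * c j q) = c j q / 2 * u j x := by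
      intro j _; ring
    have e2 : ∀ k ∈ Finset.Ico 1 N', u k x * c k r * (1 / 2) = c k r / 2 * u k x := by
      intro k _; ring
    have e3 : ∀ k ∈ Finset.Ico 1 N', ∀ j ∈ Finset.Ico 1 N',
        u k x * c k r * (u j x * c j q) = c k r * c j q * (u k x * u j x) := by
      intro k _ j _; ring
    rw [Finset.sum_congr rfl e1, Finset.sum_congr rfl e2,
      Finset.sum_congr rfl (fun k hk => Finset.sum_congr rfl (e3 k hk))]
    ring
  unfold ip
  rw [intervalIntegral.integral_congr (g :=
    fun x => 1 / 4 + (∑ j ∈ Finset.Ico 1 N', c j q / 2 * u j x)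
        + (∑ k ∈ Finset.Ico 1 N', c k r / 2 * u k x)
        + ∑ k ∈ Finset.Ico 1 N', ∑ j ∈ Finset.Ico 1 N',
            c k r * c j q * (u k x * u j x)) (fun x _ => hpt x)]
  have hi1 : IntervalIntegrable (fun x => (1 / 4 : ℝ)) MeasureTheory.volume a b :=
    intervalIntegrable_const
  have hi2 : IntervalIntegrable (fun x => ∑ j ∈ Finset.Ico 1 N', c j q / 2 * u j x)
      MeasureTheory.volume a b := by
    apply Continuous.intervalIntegrable
    exact continuous_finset_sum _ (fun j _ => continuous_const.mul (hucont j))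
  have hi3 : IntervalIntegrable (fun x => ∑ k ∈ Finset.Ico 1 N', c k r / 2 * u k x)
      MeasureTheory.volume a b := by
    apply Continuous.intervalIntegrable
    exact continuous_finset_sum _ (fun k _ => continuous_const.mul (hucont k))
  have hi4 : IntervalIntegrable (fun x => ∑ k ∈ Finset.Ico 1 N', ∑ j ∈ Finset.Ico 1 N',
      c k r * c j q * (u k x * u j x)) MeasureTheory.volume a b := by
    apply Continuous.intervalIntegrable
    exact continuous_finset_sum _ (fun k _ => continuous_finset_sum _
      (fun j _ => continuous_const.mul ((hucont k).mul (hucont j))))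
  rw [intervalIntegral.integral_add (hi1.add hi2 |>.add hi3) hi4,
    intervalIntegral.integral_add (hi1.add hi2) hi3,
    intervalIntegral.integral_add hi1 hi2]
  have I1 : ∫ x in a..b, (1 / 4 : ℝ) = (b - a) / 4 := by
    rw [intervalIntegral.integral_const]; simp [smul_eq_mul]; ring
  have Iu : ∀ k ∈ Finset.Ico 1 N', ∫ x in a..b, u k x = 0 := by
    intro k hk
    have hk1 : 1 ≤ k := (Finset.mem_Ico.mp hk).1
    have : ((k : ℤ) : ℝ) = (k : ℝ) := by push_cast; ring
    simp only [hu]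
    rw [← this]
    exact intcos a b hab k (by omega)
  have I2 : ∫ x in a..b, (∑ j ∈ Finset.Ico 1 N', c j q / 2 * u j x) = 0 := by
    rw [intervalIntegral.integral_finset_sum (f := fun j x => c j q / 2 * u j x)
      (fun j _ => (continuous_const.mul (hucont j)).intervalIntegrable a b)]
    apply Finset.sum_eq_zero
    intro j hj
    rw [intervalIntegral.integral_const_mul, Iu j hj, mul_zero]
  have I3 : ∫ x in a..b, (∑ k ∈ Finset.Ico 1 N', c k r / 2 * u k x) = 0 := by
    rw [intervalIntegral.integral_finset_sum (f := fun k x => c k r / 2 * u k x)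
      (fun k _ => (continuous_const.mul (hucont k)).intervalIntegrable a b)]
    apply Finset.sum_eq_zero
    intro k hk
    rw [intervalIntegral.integral_const_mul, Iu k hk, mul_zero]
  have I4 : ∫ x in a..b, (∑ k ∈ Finset.Ico 1 N', ∑ j ∈ Finset.Ico 1 N',
      c k r * c j q * (u k x * u j x))
      = (∑ k ∈ Finset.Ico 1 N', c k r * c k q) * ((b - a) / 2) := by
    rw [intervalIntegral.integral_finset_sum
      (f := fun k x => ∑ j ∈ Finset.Ico 1 N', c k r * c j q * (u k x * u j x))
      (fun k _ => Continuous.intervalIntegrable (continuous_finset_sum _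
        (fun j _ => continuous_const.mul ((hucont k).mul (hucont j)))) a b)]
    rw [Finset.sum_mul]
    apply Finset.sum_congr rfl
    intro k hk
    rw [intervalIntegral.integral_finset_sum (f := fun j x => c k r * c j q * (u k x * u j x))
      (fun j _ => (continuous_const.mul ((hucont k).mul (hucont j))).intervalIntegrable a b)]
    have : ∀ j ∈ Finset.Ico 1 N',
        (∫ x in a..b, c k r * c j q * (u k x * u j x))
        = c k r * c j q * (if k = j then (b - a) / 2 else 0) := by
      intro j hj
      rw [intervalIntegral.integral_const_mul,
        int_uu a b hab k j (Finset.mem_Ico.mp hk).1 (Finset.mem_Ico.mp hj).1]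
    rw [Finset.sum_congr rfl this]
    rw [Finset.sum_eq_single k]
    · simp
    · intro j _ hjk; rw [if_neg (fun h => hjk h.symm), mul_zero]
    · intro h; exact absurd hk h
  rw [I1, I2, I3, I4]
  field_simp
  ring

/-- Discrete cosine sum: `1/2 + ∑_{k=1}^{N'-1} cos(kmπ/N') = -cos(mπ)/2`. -/
lemma Tlem (N' : ℕ) (hN' : 1 ≤ N') (m : ℤ)
    (hs : Real.sin ((m : ℝ) * π / (2 * (N' : ℝ))) ≠ 0) :
    (1 / 2 : ℝ) + ∑ k ∈ Finset.Ico 1 N', Real.cos ((k : ℝ) * ((m : ℝ) * π / (N' : ℝ)))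
      = -Real.cos ((m : ℝ) * π) / 2 := by
  have hN0 : (N' : ℝ) ≠ 0 := Nat.cast_ne_zero.mpr (by omega)
  set φ : ℝ := (m : ℝ) * π / (2 * (N' : ℝ)) with hφ
  set g : ℕ → ℝ := fun k => Real.sin ((2 * (k : ℝ) + 1) * φ) with hg
  have hterm : ∀ k : ℕ, 1 ≤ k →
      Real.cos ((k : ℝ) * ((m : ℝ) * π / (N' : ℝ))) * (2 * Real.sin φ) = g k - g (k - 1) := by
    intro k hk
    have hcast : ((k - 1 : ℕ) : ℝ) = (k : ℝ) - 1 := by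
      have : (1 : ℕ) ≤ k := hk
      push_cast [this]; ring
    simp only [hg, hcast]
    rw [Real.sin_sub_sin]
    have e2 : ((2 * (k : ℝ) + 1) * φ - (2 * ((k : ℝ) - 1) + 1) * φ) / 2 = φ := by ring
    have e3 : ((2 * (k : ℝ) + 1) * φ + (2 * ((k : ℝ) - 1) + 1) * φ) / 2 = 2 * (k : ℝ) * φ := by ring
    rw [e2, e3]
    have e4 : 2 * (k : ℝ) * φ = (k : ℝ) * ((m : ℝ) * π / (N' : ℝ)) := by
      rw [hφ]; field_simp
    rw [e4]; ring
  have hsum : (∑ k ∈ Finset.Ico 1 N', Real.cos ((k : ℝ) * ((m : ℝ) * π / (N' : ℝ))))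
      * (2 * Real.sin φ) = g (N' - 1) - g 0 := by
    rw [Finset.sum_mul]
    rw [Finset.sum_congr rfl (fun k hk => hterm k (Finset.mem_Ico.mp hk).1)]
    rw [Finset.sum_Ico_eq_sum_range]
    have : ∀ i, g (1 + i) - g (1 + i - 1) = g (i + 1) - g i := by
      intro i; congr 1 <;> congr 1 <;> omega
    rw [Finset.sum_congr rfl (fun i _ => this i)]
    rw [Finset.sum_range_sub g]
  have hgN : g (N' - 1) = -Real.cos ((m : ℝ) * π) * Real.sin φ := by
    have hcast : ((N' - 1 : ℕ) : ℝ) = (N' : ℝ) - 1 := by push_cast [hN']; ring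
    simp only [hg, hcast]
    have e : (2 * ((N' : ℝ) - 1) + 1) * φ = (m : ℝ) * π - φ := by
      rw [hφ]; field_simp; ring
    rw [e, Real.sin_sub]
    have : Real.sin ((m : ℝ) * π) = 0 := Real.sin_int_mul_pi m
    rw [this]; ring
  have hg0 : g 0 = Real.sin φ := by simp [hg]
  have key : ((1 / 2 : ℝ) + ∑ k ∈ Finset.Ico 1 N',
      Real.cos ((k : ℝ) * ((m : ℝ) * π / (N' : ℝ)))) * (2 * Real.sin φ)
      = (-Real.cos ((m : ℝ) * π) / 2) * (2 * Real.sin φ) := by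
    rw [add_mul, hsum, hgN, hg0]; ring
  have h2 : (2 * Real.sin φ) ≠ 0 := mul_ne_zero two_ne_zero hs
  exact mul_right_cancel₀ h2 key

/-- Non-vanishing of `sin(mπ/(2N'))` for `0 < |m| < 2N'`. -/
lemma sinphi_ne (N' : ℕ) (hN' : 1 ≤ N') (m : ℤ) (hm : m ≠ 0) (hm2 : |m| < 2 * (N' : ℤ)) :
    Real.sin ((m : ℝ) * π / (2 * (N' : ℝ))) ≠ 0 := by
  intro h
  rcases Real.sin_eq_zero_iff.mp h with ⟨n, hn⟩
  have hN0 : (N' : ℝ) ≠ 0 := Nat.cast_ne_zero.mpr (by omega)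
  have h2 : ((n * (2 * (N' : ℤ)) : ℤ) : ℝ) = ((m : ℤ) : ℝ) := by
    push_cast
    have h3 : (n : ℝ) * π * (2 * (N' : ℝ)) = (m : ℝ) * π := by
      field_simp at hn
      rw [← hn]; ring
    have := mul_right_cancel₀ Real.pi_ne_zero
      (by linarith [h3] : (n : ℝ) * (2 * (N' : ℝ)) * π = (m : ℝ) * π)
    linarith [this]
  have h4 : n * (2 * (N' : ℤ)) = m := by exact_mod_cast h2
  have h5 : (2 * (N' : ℤ)) ∣ m := ⟨n, by linarith [h4]⟩
  exact hm (Int.eq_zero_of_abs_lt_dvd h5 hm2)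

/-- `⟨K^wl_{N'}(·, r), K^wl_{N'}(·, q)⟩ = K^wl_{N'}(a + (2r−1)(b−a)/(2N'), q)`;
in particular the scaling functions form an orthogonal set. -/
theorem stmt12 (a b : ℝ) (hab : a < b) (N' : ℕ) (hN' : 1 ≤ N') (r q : ℕ)
    (hr : 1 ≤ r) (hr' : r ≤ N') (hq : 1 ≤ q) (hq' : q ≤ N') :
    ip a b (fun x => Kwl a b N' x r) (fun x => Kwl a b N' x q) =
      Kwl a b N' (a + (2 * (r : ℝ) - 1) * (b - a) / (2 * (N' : ℝ))) q ∧
    (r ≠ q → ip a b (fun x => Kwl a b N' x r) (fun x => Kwl a b N' x q) = 0) := by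
  have hL : b - a ≠ 0 := sub_ne_zero.mpr hab.ne'
  have hN0 : (N' : ℝ) ≠ 0 := Nat.cast_ne_zero.mpr (by omega)
  have hEq := ip_eq a b hab N' r q
  constructor
  · rw [hEq]
    unfold Kwl
    congr 1
    apply Finset.sum_congr rfl
    intro k _
    congr 2
    field_simp
    ring
  · intro hrq
    rw [hEq]
    set m1 : ℤ := (r : ℤ) - q with hm1
    set m2 : ℤ := (r : ℤ) + q - 1 with hm2
    have hpt : ∀ k ∈ Finset.Ico 1 N',
        Real.cos ((k : ℝ) * π * (2 * (r : ℝ) - 1) / (2 * (N' : ℝ))) *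
        Real.cos ((k : ℝ) * π * (2 * (q : ℝ) - 1) / (2 * (N' : ℝ)))
        = (Real.cos ((k : ℝ) * ((m1 : ℝ) * π / (N' : ℝ)))
          + Real.cos ((k : ℝ) * ((m2 : ℝ) * π / (N' : ℝ)))) / 2 := by
      intro k _
      set A : ℝ := (k : ℝ) * π * (2 * (r : ℝ) - 1) / (2 * (N' : ℝ)) with hA
      set B : ℝ := (k : ℝ) * π * (2 * (q : ℝ) - 1) / (2 * (N' : ℝ)) with hB
      have e1 : (k : ℝ) * ((m1 : ℝ) * π / (N' : ℝ)) = A - B := by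
        rw [hA, hB, hm1]; push_cast; field_simp; ring
      have e2 : (k : ℝ) * ((m2 : ℝ) * π / (N' : ℝ)) = A + B := by
        rw [hA, hB, hm2]; push_cast; field_simp; ring
      rw [e1, e2, Real.cos_sub, Real.cos_add]; ring
    rw [Finset.sum_congr rfl hpt]
    have hs1 : Real.sin ((m1 : ℝ) * π / (2 * (N' : ℝ))) ≠ 0 := by
      apply sinphi_ne N' hN' m1 (by omega)
      rw [abs_lt]; constructor <;> omega
    have hs2 : Real.sin ((m2 : ℝ) * π / (2 * (N' : ℝ))) ≠ 0 := by
      apply sinphi_ne N' hN' m2 (by omega)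
      rw [abs_lt]; constructor <;> omega
    have T1 := Tlem N' hN' m1 hs1
    have T2 := Tlem N' hN' m2 hs2
    have hcos2 : Real.cos ((m2 : ℝ) * π) = -Real.cos ((m1 : ℝ) * π) := by
      have e : (m2 : ℝ) * π = ((m1 : ℝ) * π - π) + (q : ℤ) * (2 * π) := by
        rw [hm1, hm2]; push_cast; ring
      rw [e, Real.cos_add_int_mul_two_pi]
      rw [show (m1 : ℝ) * π - π = -(π - (m1 : ℝ) * π) by ring, Real.cos_neg, Real.cos_pi_sub]
    have hsplit : ∑ k ∈ Finset.Ico 1 N',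
        (Real.cos ((k : ℝ) * ((m1 : ℝ) * π / (N' : ℝ)))
          + Real.cos ((k : ℝ) * ((m2 : ℝ) * π / (N' : ℝ)))) / 2
        = (∑ k ∈ Finset.Ico 1 N', Real.cos ((k : ℝ) * ((m1 : ℝ) * π / (N' : ℝ)))) / 2
          + (∑ k ∈ Finset.Ico 1 N', Real.cos ((k : ℝ) * ((m2 : ℝ) * π / (N' : ℝ)))) / 2 := by
      rw [← Finset.sum_div, Finset.sum_add_distrib, add_div]
    rw [hsplit]
    have : (∑ k ∈ Finset.Ico 1 N', Real.cos ((k : ℝ) * ((m1 : ℝ) * π / (N' : ℝ))))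
        = -Real.cos ((m1 : ℝ) * π) / 2 - 1 / 2 := by linarith [T1]
    have h2 : (∑ k ∈ Finset.Ico 1 N', Real.cos ((k : ℝ) * ((m2 : ℝ) * π / (N' : ℝ))))
        = -Real.cos ((m2 : ℝ) * π) / 2 - 1 / 2 := by linarith [T2]
    rw [this, h2, hcos2]
    ring

end
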